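/- Let s : (0,∞) × ℝ × ℝⁿ → ℝ be strictly concave with ∂s/∂u > 0. Define η(ρ, m, E, Z) = −ρ · s(1/ρ, E/ρ − |m|²/(2ρ²), Z/ρ) on the domain ρ > 0, m ∈ ℝᵈ, E ∈ ℝ, Z ∈ ℝⁿ. Then η is strictly convex in (ρ, m, E, Z). -/

import Mathlib

/-!
The substitution `u = e - |v|²/2` is concave, and strictly concave in `v`; since `s` is strictly
concave and strictly increasing in `u`, `s̃ (ν, v, e, z) = s (ν, e - |v|²/2, z)` is strictly
concave (strictness comes from `s` when the substituted points differ, from `|v|²` otherwise).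
Then `η (ρ, x) = -ρ s̃ (ρ⁻¹ • (1, x))`, and `(ρ, x) ↦ ρ f (ρ⁻¹ • (1, x))` preserves strict
concavity: it is injective in the argument of `f` and turns the convex weights `a, b` into
`a ρ₁ / ρ, b ρ₂ / ρ` with `ρ = a ρ₁ + b ρ₂`.
-/

open Finset

lemma strictConvexOn_half_sum_sq {ι : Type*} [Fintype ι] :
    StrictConvexOn ℝ Set.univ fun v : ι → ℝ => (∑ i, v i ^ 2) / 2 := by
  refine ⟨convex_univ, fun v _ w _ hvw a b ha hb hab => ?_⟩
  obtain ⟨j, hj⟩ := Function.ne_iff.mp hvw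
  have gap (i : ι) :
      a * v i ^ 2 + b * w i ^ 2 - (a * v i + b * w i) ^ 2 = a * b * (v i - w i) ^ 2 := by
    linear_combination -(a * v i ^ 2 + b * w i ^ 2) * hab
  have hpos : 0 < ∑ i, a * b * (v i - w i) ^ 2 :=
    sum_pos' (fun i _ => by positivity) ⟨j, mem_univ j, by have := sub_ne_zero.mpr hj; positivity⟩
  simp only [← gap, sum_sub_distrib, sum_add_distrib, ← mul_sum] at hpos
  simp only [Pi.add_apply, Pi.smul_apply, smul_eq_mul]
  linarith

lemma convex_setOf_fst_pos {V : Type*} [AddCommGroup V] [Module ℝ V] :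
    Convex ℝ {p : ℝ × V | 0 < p.1} :=
  (convex_Ioi 0).linear_preimage (LinearMap.fst ℝ ℝ V)

lemma StrictConcaveOn.comp_sub_strictConvexOn {V W : Type*} [AddCommGroup V] [Module ℝ V]
    [AddCommGroup W] [Module ℝ W] {s : ℝ × ℝ × W → ℝ} {φ : V → ℝ}
    (hs : StrictConcaveOn ℝ {p : ℝ × ℝ × W | 0 < p.1} s)
    (hmono : ∀ ν z, StrictMono fun u => s (ν, u, z))
    (hφ : StrictConvexOn ℝ Set.univ φ) :
    StrictConcaveOn ℝ {p : ℝ × V × ℝ × W | 0 < p.1}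
      fun p => s (p.1, p.2.2.1 - φ p.2.1, p.2.2.2) := by
  refine ⟨convex_setOf_fst_pos, ?_⟩
  rintro ⟨ν₁, v₁, e₁, z₁⟩ hp ⟨ν₂, v₂, e₂, z₂⟩ hq hpq a b ha hb hab
  set P : ℝ × ℝ × W := (ν₁, e₁ - φ v₁, z₁)
  set Q : ℝ × ℝ × W := (ν₂, e₂ - φ v₂, z₂)
  have hP : P ∈ {p : ℝ × ℝ × W | 0 < p.1} := hp
  have hQ : Q ∈ {p : ℝ × ℝ × W | 0 < p.1} := hq
  set R := a • P + b • Q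
  set u := a * e₁ + b * e₂ - φ (a • v₁ + b • v₂)
  show a • s P + b • s Q < s (R.1, u, R.2.2)
  have hRu : R.2.1 = u + (φ (a • v₁ + b • v₂) - (a • φ v₁ + b • φ v₂)) := by
    simp only [R, P, Q, u, Prod.snd_add, Prod.smul_snd, Prod.smul_fst, Prod.fst_add, smul_eq_mul]
    ring
  by_cases hv : v₁ = v₂
  · subst hv
    have hPQ : P ≠ Q := by
      intro h
      simp only [P, Q, Prod.mk.injEq, sub_left_inj] at h
      obtain ⟨rfl, rfl, rfl⟩ := h
      exact hpq rfl
    have hRu : R.2.1 = u := by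
      rw [hRu, Convex.combo_self hab, ← add_smul, hab, one_smul, sub_self, add_zero]
    calc a • s P + b • s Q < s R := hs.2 hP hQ hPQ ha hb hab
      _ = s (R.1, u, R.2.2) := by rw [← hRu]
  · have hRu : R.2.1 < u := by
      have := hφ.2 trivial trivial hv ha hb hab
      linarith
    calc a • s P + b • s Q ≤ s R := hs.concaveOn.2 hP hQ ha.le hb.le hab
      _ < s (R.1, u, R.2.2) := hmono _ _ hRu

lemma StrictConcaveOn.perspective {V : Type*} [AddCommGroup V] [Module ℝ V] {f : ℝ × V → ℝ}
    (hf : StrictConcaveOn ℝ {p : ℝ × V | 0 < p.1} f) :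
    StrictConcaveOn ℝ {p : ℝ × V | 0 < p.1} fun p => p.1 * f (p.1⁻¹ • (1, p.2)) := by
  refine ⟨convex_setOf_fst_pos, ?_⟩
  rintro ⟨ρ₁, x₁⟩ (hρ₁ : 0 < ρ₁) ⟨ρ₂, x₂⟩ (hρ₂ : 0 < ρ₂) hne a b ha hb hab
  set ρ := a * ρ₁ + b * ρ₂
  have hρ : 0 < ρ := by positivity
  show a * (ρ₁ * f (ρ₁⁻¹ • (1, x₁))) + b * (ρ₂ * f (ρ₂⁻¹ • (1, x₂)))
    < ρ * f (ρ⁻¹ • (1, a • x₁ + b • x₂))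
  have hw₁ : ρ₁⁻¹ • ((1 : ℝ), x₁) ∈ {p : ℝ × V | 0 < p.1} := by simpa using hρ₁
  have hw₂ : ρ₂⁻¹ • ((1 : ℝ), x₂) ∈ {p : ℝ × V | 0 < p.1} := by simpa using hρ₂
  have hw : ρ₁⁻¹ • ((1 : ℝ), x₁) ≠ ρ₂⁻¹ • (1, x₂) := by
    intro h
    obtain rfl : ρ₁ = ρ₂ := by simpa using congrArg Prod.fst h
    have := smul_right_injective (ℝ × V) (inv_ne_zero hρ₁.ne') h
    exact hne (by simp_all)
  have hmix : (a * ρ₁ / ρ) • ρ₁⁻¹ • ((1 : ℝ), x₁) + (b * ρ₂ / ρ) • ρ₂⁻¹ • ((1 : ℝ), x₂)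
      = ρ⁻¹ • (1, a • x₁ + b • x₂) := by
    rw [smul_smul, smul_smul, show a * ρ₁ / ρ * ρ₁⁻¹ = ρ⁻¹ * a by field_simp,
      show b * ρ₂ / ρ * ρ₂⁻¹ = ρ⁻¹ * b by field_simp, mul_smul, mul_smul, ← smul_add]
    simp [hab]
  calc a * (ρ₁ * f (ρ₁⁻¹ • (1, x₁))) + b * (ρ₂ * f (ρ₂⁻¹ • (1, x₂)))
      = ρ * ((a * ρ₁ / ρ) • f (ρ₁⁻¹ • (1, x₁)) + (b * ρ₂ / ρ) • f (ρ₂⁻¹ • (1, x₂))) := by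
        simp only [smul_eq_mul]; field_simp
    _ < ρ * f ((a * ρ₁ / ρ) • ρ₁⁻¹ • ((1 : ℝ), x₁) + (b * ρ₂ / ρ) • ρ₂⁻¹ • ((1 : ℝ), x₂)) :=
        mul_lt_mul_of_pos_left (hf.2 hw₁ hw₂ hw (by positivity) (by positivity)
          (by rw [← add_div, div_self hρ.ne'])) hρ
    _ = ρ * f (ρ⁻¹ • (1, a • x₁ + b • x₂)) := by rw [hmix]

/-- `η(ρ, m, E, Z) = −ρ · s(1/ρ, E/ρ − |m|²/(2ρ²), Z/ρ)` is
strictly convex on `{ρ > 0}` when `s` is strictly concave with `s_u > 0`. -/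
theorem stmt_5 (d n : ℕ) (s : ℝ × ℝ × (Fin n → ℝ) → ℝ)
    (hconc : StrictConcaveOn ℝ {p : ℝ × ℝ × (Fin n → ℝ) | 0 < p.1} s)
    (hmono : ∀ (ν : ℝ) (z : Fin n → ℝ), StrictMono fun u => s (ν, u, z)) :
    StrictConvexOn ℝ
      {p : ℝ × (Fin d → ℝ) × ℝ × (Fin n → ℝ) | 0 < p.1}
      (fun p => -p.1 * s (p.1⁻¹,
        p.2.2.1 / p.1 - (∑ i, p.2.1 i ^ 2) / (2 * p.1 ^ 2),
        p.1⁻¹ • p.2.2.2)) := by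
  have hη := ((hconc.comp_sub_strictConvexOn hmono
    (strictConvexOn_half_sum_sq (ι := Fin d))).perspective).neg
  refine hη.congr fun ⟨ρ, m, E, Z⟩ _ => ?_
  simp only [Pi.neg_apply, Prod.smul_mk, smul_eq_mul, mul_one, Pi.smul_apply, mul_pow,
    ← mul_sum, neg_mul]
  congr 5
  ring
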